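/- Let G be an Abelian group with identity e and let S ⊆ G∖{e} be a finite symmetric generating set (s∈S implies s^{-1}∈S) of cardinality 2N. Then the Cayley graph of (G,S) satisfies CD(0,2N): for every function f:G→ℝ and every x∈G, Γ₂f(x) ≥ (1/(2N))·(Δf(x))², where Δf(x)=∑_{s∈S}(f(x·s)−f(x)), Γf(x)=(1/2)∑_{s∈S}(f(x·s)−f(x))², Γ(f,g)(x)=(1/2)∑_{s∈S}(f(x·s)−f(x))(g(x·s)−g(x)), and Γ₂f=(1/2)Δ(Γf)−Γ(f,Δf). -/

import Mathlib

noncomputable section CayleySetOps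

variable {G : Type*} [Group G]

/-- The Laplacian on the Cayley graph of `(G, S)`: `Δf(x) = ∑_{s ∈ S} (f(x·s) - f(x))`. -/
def lapS (S : Finset G) (f : G → ℝ) (x : G) : ℝ := ∑ s ∈ S, (f (x * s) - f x)

/-- `Γf(x) = (1/2) ∑_{s ∈ S} (f(x·s) - f(x))²`. -/
def gammaS (S : Finset G) (f : G → ℝ) (x : G) : ℝ :=
  (1 / 2) * ∑ s ∈ S, (f (x * s) - f x) ^ 2

/-- `Γ(f,g)(x) = (1/2) ∑_{s ∈ S} (f(x·s) - f(x)) (g(x·s) - g(x))`. -/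
def gammaBilS (S : Finset G) (f g : G → ℝ) (x : G) : ℝ :=
  (1 / 2) * ∑ s ∈ S, (f (x * s) - f x) * (g (x * s) - g x)

/-- `Γ₂ f = (1/2) Δ (Γ f) - Γ(f, Δ f)`. -/
def gamma2S (S : Finset G) (f : G → ℝ) (x : G) : ℝ :=
  (1 / 2) * lapS S (gammaS S f) x - gammaBilS S f (lapS S f) x

end CayleySetOps

/-- In the abelian case, `Γ₂ f(x) = (1/4) ∑_{s,t} (f(xst) - f(xs) - f(xt) + f(x))²`. -/
lemma gamma2S_eq {G : Type*} [CommGroup G] (S : Finset G) (f : G → ℝ) (x : G) :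
    gamma2S S f x =
      (1 / 4) * ∑ s ∈ S, ∑ t ∈ S, (f (x * s * t) - f (x * s) - f (x * t) + f x) ^ 2 := by
  have h1 : lapS S (gammaS S f) x =
      ∑ s ∈ S, ∑ t ∈ S,
        ((f (x * s * t) - f (x * t)) ^ 2 - (f (x * s) - f x) ^ 2) / 2 := by
    rw [Finset.sum_comm]
    unfold lapS gammaS
    refine Finset.sum_congr rfl fun t ht => ?_
    rw [Finset.mul_sum, Finset.mul_sum, ← Finset.sum_sub_distrib]
    refine Finset.sum_congr rfl fun s hs => ?_
    have : x * t * s = x * s * t := by rw [mul_right_comm]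
    rw [this]; ring
  have h2 : gammaBilS S f (lapS S f) x =
      ∑ s ∈ S, ∑ t ∈ S,
        (f (x * s) - f x) * ((f (x * s * t) - f (x * s)) - (f (x * t) - f x)) / 2 := by
    unfold gammaBilS lapS
    rw [Finset.mul_sum]
    refine Finset.sum_congr rfl fun s hs => ?_
    rw [← Finset.sum_sub_distrib, Finset.mul_sum, Finset.mul_sum]
    exact Finset.sum_congr rfl fun t _ => by ring
  rw [gamma2S, h1, h2]
  simp only [Finset.mul_sum]
  rw [← Finset.sum_sub_distrib]
  refine Finset.sum_congr rfl fun s hs => ?_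
  rw [← Finset.sum_sub_distrib]
  exact Finset.sum_congr rfl fun t ht => by ring

/-- The Cayley graph of an Abelian group with a finite symmetric
generating set `S ⊆ G ∖ {e}` of cardinality `2N` satisfies `CD(0, 2N)`:
`Γ₂ f(x) ≥ (1/(2N)) (Δf(x))²`. -/
theorem abelian_cayley_CD {G : Type*} [CommGroup G] (S : Finset G) (N : ℕ)
    (h1 : (1 : G) ∉ S) (hsym : ∀ s ∈ S, s⁻¹ ∈ S)
    (hgen : Subgroup.closure (S : Set G) = ⊤) (hcard : S.card = 2 * N)
    (f : G → ℝ) (x : G) :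
    (1 / (2 * N : ℝ)) * (lapS S f x) ^ 2 ≤ gamma2S S f x := by
  rcases Nat.eq_zero_or_pos N with hN | hN
  · subst hN
    have hS : S = ∅ := Finset.card_eq_zero.mp (by simpa using hcard)
    subst hS
    simp [gamma2S, lapS, gammaS, gammaBilS]
  -- diagonal bound: the full double sum dominates the (s, s⁻¹) terms
  set c : G → G → ℝ := fun s t => (f (x * s * t) - f (x * s) - f (x * t) + f x) ^ 2 with hc
  have hdiag : ∑ s ∈ S, c s s⁻¹ ≤ ∑ s ∈ S, ∑ t ∈ S, c s t := by
    refine Finset.sum_le_sum fun s hs => ?_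
    exact Finset.single_le_sum (f := c s) (fun t _ => sq_nonneg _) (hsym s hs)
  have hdiag' : ∀ s ∈ S, c s s⁻¹ = (f (x * s) + f (x * s⁻¹) - 2 * f x) ^ 2 := by
    intro s hs
    have : x * s * s⁻¹ = x := by group
    simp only [hc, this]
    ring
  -- sum over inverses equals the original sum
  have hinv : ∑ s ∈ S, (f (x * s⁻¹) - f x) = ∑ s ∈ S, (f (x * s) - f x) :=
    Finset.sum_nbij' (fun s => s⁻¹) (fun s => s⁻¹) hsym hsym
      (fun a _ => inv_inv a) (fun a _ => inv_inv a) (fun a _ => rfl)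
  have hsum : ∑ s ∈ S, (f (x * s) + f (x * s⁻¹) - 2 * f x) = 2 * lapS S f x := by
    have : ∑ s ∈ S, (f (x * s) + f (x * s⁻¹) - 2 * f x)
        = ∑ s ∈ S, ((f (x * s) - f x) + (f (x * s⁻¹) - f x)) := by
      refine Finset.sum_congr rfl fun s _ => by ring
    rw [this, Finset.sum_add_distrib, hinv, lapS, two_mul]
  -- Cauchy-Schwarz
  have hCS : (2 * lapS S f x) ^ 2 ≤ (2 * N : ℝ) * ∑ s ∈ S, (f (x * s) + f (x * s⁻¹) - 2 * f x) ^ 2 := by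
    rw [← hsum]
    have := sq_sum_le_card_mul_sum_sq (s := S)
      (f := fun s => f (x * s) + f (x * s⁻¹) - 2 * f x)
    rw [hcard] at this
    exact_mod_cast this
  have hNpos : (0 : ℝ) < 2 * N := by positivity
  rw [gamma2S_eq]
  have hkey : (lapS S f x) ^ 2 ≤ (2 * N : ℝ) / 4 * ∑ s ∈ S, ∑ t ∈ S, c s t := by
    have e1 : ∑ s ∈ S, (f (x * s) + f (x * s⁻¹) - 2 * f x) ^ 2 = ∑ s ∈ S, c s s⁻¹ :=
      Finset.sum_congr rfl fun s hs => (hdiag' s hs).symm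
    nlinarith [hCS, hdiag, e1]
  rw [div_mul_eq_mul_div, one_mul, div_le_iff₀ hNpos]
  calc (lapS S f x) ^ 2 ≤ (2 * N : ℝ) / 4 * ∑ s ∈ S, ∑ t ∈ S, c s t := hkey
    _ = 1 / 4 * (∑ s ∈ S, ∑ t ∈ S, c s t) * (2 * N : ℝ) := by ring
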